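/- For every integer n ≥ 88, f(n) ≥ ⌈n/3⌉ + 1. -/

import Mathlib

/-!
With `m = ⌈n/3⌉`, the ratio `(n+4) C(n+3, m+1) / ((n+1) C(n, m))` equals
`(n+2)(n+3)(n+4) / ((m+1)(n+1-m)(n+2-m))`, which tends to `27/4` and is at most `2^3` once
`n ≥ 8`. Hence `(n+1) C(n, ⌈n/3⌉) ≤ 2^n` propagates from `n` to `n+3`, and it holds directly
for `n = 88, 89, 90`. Since `C(n, k)` increases for `k ≤ n/2`, every `k ≤ ⌈n/3⌉` then has
`C(n, k) ≤ 2^n/(n+1)`, while `k = n/2` exceeds the threshold.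
-/

noncomputable def f (n : ℕ) : ℕ :=
  sInf {k : ℕ | 0 < k ∧ (n.choose k : ℝ) > 2 ^ n / (n + 1)}

open Finset

lemma choose_add_three_succ_mul (n m : ℕ) :
    (n + 3).choose (m + 1) * ((m + 1) * ((n + 1 - m) * (n + 2 - m))) =
      n.choose m * ((n + 1) * ((n + 2) * (n + 3))) := by
  have h1 : (n + 3) * (n + 2).choose m = (n + 3).choose (m + 1) * (m + 1) :=
    Nat.add_one_mul_choose_eq (n + 2) m
  have h2 : (n + 1).choose m * (n + 2) = (n + 2).choose m * (n + 2 - m) :=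
    Nat.choose_mul_succ_eq (n + 1) m
  have h3 : n.choose m * (n + 1) = (n + 1).choose m * (n + 1 - m) :=
    Nat.choose_mul_succ_eq n m
  calc (n + 3).choose (m + 1) * ((m + 1) * ((n + 1 - m) * (n + 2 - m)))
      = (n + 3).choose (m + 1) * (m + 1) * ((n + 2 - m) * (n + 1 - m)) := by ring
    _ = (n + 2).choose m * (n + 2 - m) * ((n + 3) * (n + 1 - m)) := by rw [← h1]; ring
    _ = (n + 1).choose m * (n + 1 - m) * ((n + 2) * (n + 3)) := by rw [← h2]; ring
    _ = n.choose m * ((n + 1) * ((n + 2) * (n + 3))) := by rw [← h3]; ring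

lemma add_four_mul_le_eight_mul_of_third {n m : ℕ} (hn : 8 ≤ n) (h₁ : n ≤ 3 * m)
    (h₂ : 3 * m ≤ n + 2) :
    (n + 4) * ((n + 2) * (n + 3)) ≤ 8 * ((m + 1) * ((n + 1 - m) * (n + 2 - m))) := by
  obtain ⟨t, rfl | rfl | rfl⟩ : ∃ t, n = 3 * t ∨ n = 3 * t + 1 ∨ n = 3 * t + 2 :=
    ⟨n / 3, by omega⟩
  · obtain rfl : m = t := by omega
    rw [show 3 * m + 1 - m = 2 * m + 1 by omega, show 3 * m + 2 - m = 2 * m + 2 by omega]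
    have : 3 ≤ m := by omega
    nlinarith [Nat.mul_le_mul this this]
  · obtain rfl : m = t + 1 := by omega
    rw [show 3 * t + 1 + 1 - (t + 1) = 2 * t + 1 by omega,
      show 3 * t + 1 + 2 - (t + 1) = 2 * t + 2 by omega]
    have : 3 ≤ t := by omega
    nlinarith [Nat.mul_le_mul this this]
  · obtain rfl : m = t + 1 := by omega
    rw [show 3 * t + 2 + 1 - (t + 1) = 2 * t + 2 by omega,
      show 3 * t + 2 + 2 - (t + 1) = 2 * t + 3 by omega]
    have : 2 ≤ t := by omega
    nlinarith [Nat.mul_le_mul this this]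

lemma succ_mul_choose_le_two_pow_add_three {n m : ℕ} (hn : 8 ≤ n) (h₁ : n ≤ 3 * m)
    (h₂ : 3 * m ≤ n + 2) (h : (n + 1) * n.choose m ≤ 2 ^ n) :
    (n + 4) * (n + 3).choose (m + 1) ≤ 2 ^ (n + 3) := by
  set P := (m + 1) * ((n + 1 - m) * (n + 2 - m))
  have hP : 0 < P := Nat.mul_pos (by omega) (Nat.mul_pos (by omega) (by omega))
  refine Nat.le_of_mul_le_mul_right ?_ hP
  calc (n + 4) * (n + 3).choose (m + 1) * P
      = (n + 4) * ((n + 2) * (n + 3)) * ((n + 1) * n.choose m) := by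
        rw [mul_assoc, choose_add_three_succ_mul]; ring
    _ ≤ 8 * P * 2 ^ n :=
        Nat.mul_le_mul (add_four_mul_le_eight_mul_of_third hn h₁ h₂) h
    _ = 2 ^ (n + 3) * P := by ring

theorem succ_mul_choose_ceil_third_le_two_pow {n : ℕ} (hn : 88 ≤ n) :
    (n + 1) * n.choose ((n + 2) / 3) ≤ 2 ^ n := by
  induction n using Nat.strong_induction_on with
  | _ n ih =>
    rcases lt_or_ge n 91 with hlt | hge
    · interval_cases n <;> rw [Nat.choose_eq_descFactorial_div_factorial] <;> decide
    · obtain ⟨k, rfl⟩ : ∃ k, n = k + 3 := ⟨n - 3, by omega⟩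
      rw [show (k + 3 + 2) / 3 = (k + 2) / 3 + 1 by omega]
      exact succ_mul_choose_le_two_pow_add_three (by omega) (by omega) (by omega)
        (ih k (by omega) (by omega))

lemma choose_le_choose_of_le_half {n a b : ℕ} (hab : a ≤ b) (hb : b ≤ n / 2) :
    n.choose a ≤ n.choose b := by
  induction b, hab using Nat.le_induction with
  | base => exact le_rfl
  | succ k _ ih => exact (ih (by omega)).trans (Nat.choose_le_succ_of_lt_half_left (by omega))

lemma two_pow_lt_succ_mul_choose_half {n : ℕ} (hn : 2 ≤ n) :
    2 ^ n < (n + 1) * n.choose (n / 2) := by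
  have h_middle : n.choose 0 < n.choose (n / 2) := by
    simpa using (one_lt_two.trans_le hn).trans_le (by simpa using Nat.choose_le_middle 1 n)
  calc 2 ^ n = ∑ k ∈ range (n + 1), n.choose k := (Nat.sum_range_choose n).symm
    _ < ∑ _k ∈ range (n + 1), n.choose (n / 2) :=
        sum_lt_sum (fun k _ ↦ Nat.choose_le_middle k n) ⟨0, by simp, h_middle⟩
    _ = (n + 1) * n.choose (n / 2) := by simp

lemma choose_gt_two_pow_div_iff (n k : ℕ) :
    (n.choose k : ℝ) > 2 ^ n / (n + 1) ↔ 2 ^ n < (n + 1) * n.choose k := by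
  rw [gt_iff_lt, div_lt_iff₀ (by positivity), mul_comm]
  norm_cast

theorem f_ge_ceil_third (n : ℕ) (hn : 88 ≤ n) : f n ≥ (n + 2) / 3 + 1 := by
  have hne : {k : ℕ | 0 < k ∧ (n.choose k : ℝ) > 2 ^ n / (n + 1)}.Nonempty :=
    ⟨n / 2, by omega,
      (choose_gt_two_pow_div_iff n _).2 (two_pow_lt_succ_mul_choose_half (by omega))⟩
  refine le_csInf hne fun k ⟨_, hk⟩ ↦ ?_
  by_contra! hkm
  have hmono : n.choose k ≤ n.choose ((n + 2) / 3) :=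
    choose_le_choose_of_le_half (by omega) (by omega)
  have h_large := (choose_gt_two_pow_div_iff n k).1 hk
  have h_small :=
    (Nat.mul_le_mul_left (n + 1) hmono).trans (succ_mul_choose_ceil_third_le_two_pow hn)
  exact h_large.not_ge h_small
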